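/- Let A be an n×n complex matrix of index k, let m ≥ 1 be an integer, and let l be an integer with l ≥ k. Then A^{#_m} A^{l+1} = A^l. -/

import Mathlib

open Matrix

/-- `X` is the Moore–Penrose inverse of `A` (four Penrose equations). -/
def MoorePenroseOf {n : ℕ} (A X : Matrix (Fin n) (Fin n) ℂ) : Prop :=
  A * X * A = A ∧ X * A * X = X ∧ (A * X)ᴴ = A * X ∧ (X * A)ᴴ = X * A

/-- Column space of a square complex matrix. -/
noncomputable def colSpace {n : ℕ} (A : Matrix (Fin n) (Fin n) ℂ) : Submodule ℂ (Fin n → ℂ) :=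
  LinearMap.range A.mulVecLin

/-- Null space of a square complex matrix. -/
noncomputable def nullSpace {n : ℕ} (A : Matrix (Fin n) (Fin n) ℂ) : Submodule ℂ (Fin n → ℂ) :=
  LinearMap.ker A.mulVecLin

/-- `k` is the index of `A`: the smallest nonnegative integer with
`rank(A^k) = rank(A^(k+1))`. -/
def HasIndex {n : ℕ} (A : Matrix (Fin n) (Fin n) ℂ) (k : ℕ) : Prop :=
  (A ^ k).rank = (A ^ (k + 1)).rank ∧ ∀ j < k, (A ^ j).rank ≠ (A ^ (j + 1)).rank

/-- `X` is the core-EP inverse of `A` (where `k = Ind(A)`): `XAX = X` and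
`R(X) = R(Xᴴ) = R(A^k)`. -/
def IsCoreEP {n : ℕ} (A X : Matrix (Fin n) (Fin n) ℂ) (k : ℕ) : Prop :=
  X * A * X = X ∧ colSpace X = colSpace (A ^ k) ∧ colSpace Xᴴ = colSpace (A ^ k)

/-!
Both projector-type factors act as the identity on `R(A^l)` for `l ≥ k`. Since
`R(A^l) = R(A^k)` for every `l ≥ k`, the range of `A^l` lies in that of `A^m`, on which
`A^m (A^m)†` is the identity, and in `R(A⊕)`, on which `A⊕ A` is the identity. The latter
gives `A⊕ A^(j+1) = A^j` for `j ≥ k`, and iterating it `m + 1` times turns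
`(A⊕)^(m+1) A^m A^(l+1)` into `A^l`.
-/

theorem pow_mul_pow_add_eq_of_mul_pow_succ {M : Type*} [Monoid M] {x a : M} {k : ℕ}
    (h : ∀ j, k ≤ j → x * a ^ (j + 1) = a ^ j) (i : ℕ) {j : ℕ} (hj : k ≤ j) :
    x ^ i * a ^ (i + j) = a ^ j := by
  induction i generalizing j with
  | zero => simp
  | succ i ih =>
    rw [show i + 1 + j = i + (j + 1) by omega, pow_succ', mul_assoc, ih (by omega), h j hj]

section ColSpace

variable {n : ℕ}

theorem colSpace_mul (A B : Matrix (Fin n) (Fin n) ℂ) :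
    colSpace (A * B) = (colSpace B).map A.mulVecLin := by
  rw [colSpace, colSpace, Matrix.mulVecLin_mul, LinearMap.range_comp]

theorem colSpace_mul_le_left (A B : Matrix (Fin n) (Fin n) ℂ) :
    colSpace (A * B) ≤ colSpace A := by
  rw [colSpace, colSpace, Matrix.mulVecLin_mul]
  exact LinearMap.range_comp_le_range _ _

theorem mul_eq_self_of_colSpace_le {E A B : Matrix (Fin n) (Fin n) ℂ} (hEA : E * A = A)
    (hBA : colSpace B ≤ colSpace A) : E * B = B := by
  refine Matrix.ext_iff_mulVec.2 fun x => ?_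
  obtain ⟨y, hy⟩ := hBA ⟨x, rfl⟩
  simp only [Matrix.mulVecLin_apply] at hy
  rw [← Matrix.mulVec_mulVec, ← hy, Matrix.mulVec_mulVec, hEA]

theorem colSpace_pow_eq_of_rank_eq {A : Matrix (Fin n) (Fin n) ℂ} {k : ℕ}
    (hk : (A ^ k).rank = (A ^ (k + 1)).rank) {j : ℕ} (hj : k ≤ j) :
    colSpace (A ^ j) = colSpace (A ^ k) := by
  have hsucc : colSpace (A ^ (k + 1)) = colSpace (A ^ k) :=
    Submodule.eq_of_le_of_finrank_eq (pow_succ A k ▸ colSpace_mul_le_left _ _) hk.symm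
  induction j, hj using Nat.le_induction with
  | base => rfl
  | succ j _ ih => rw [pow_succ', colSpace_mul, ih, ← colSpace_mul, ← pow_succ', hsucc]

theorem colSpace_pow_le_of_rank_eq {A : Matrix (Fin n) (Fin n) ℂ} {k : ℕ}
    (hk : (A ^ k).rank = (A ^ (k + 1)).rank) {j : ℕ} (hj : k ≤ j) (i : ℕ) :
    colSpace (A ^ j) ≤ colSpace (A ^ i) := by
  rw [colSpace_pow_eq_of_rank_eq hk hj,
    ← colSpace_pow_eq_of_rank_eq hk (le_max_of_le_right hj : k ≤ max i j),
    ← Nat.add_sub_of_le (le_max_left i j), pow_add]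
  exact colSpace_mul_le_left _ _

end ColSpace

theorem IsCoreEP.mul_pow_succ {n k : ℕ} {A X : Matrix (Fin n) (Fin n) ℂ}
    (hX : IsCoreEP A X k) (hk : (A ^ k).rank = (A ^ (k + 1)).rank) {j : ℕ} (hj : k ≤ j) :
    X * A ^ (j + 1) = A ^ j := by
  rw [pow_succ', ← mul_assoc]
  exact mul_eq_self_of_colSpace_le hX.1 (hX.2.1 ▸ colSpace_pow_le_of_rank_eq hk hj k)

theorem stmt_6_general {n k m l : ℕ} (hl : k ≤ l)
    (A CEP AmDag : Matrix (Fin n) (Fin n) ℂ)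
    (hInd : HasIndex A k)
    (hCEP : IsCoreEP A CEP k)
    (hMP : MoorePenroseOf (A ^ m) AmDag) :
    CEP ^ (m + 1) * A ^ m * (A ^ m * AmDag) * A ^ (l + 1) = A ^ l := by
  have hproj : A ^ m * AmDag * A ^ (l + 1) = A ^ (l + 1) :=
    mul_eq_self_of_colSpace_le hMP.1 (colSpace_pow_le_of_rank_eq hInd.1 (by omega) m)
  calc CEP ^ (m + 1) * A ^ m * (A ^ m * AmDag) * A ^ (l + 1)
      = CEP ^ (m + 1) * A ^ (m + 1 + l) := by
        rw [mul_assoc, hproj, mul_assoc, ← pow_add, ← add_assoc, Nat.add_right_comm]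
    _ = A ^ l :=
        pow_mul_pow_add_eq_of_mul_pow_succ (fun _ hj => hCEP.mul_pow_succ hInd.1 hj) _ hl

/-- for `l ≥ k`, `A^{#_m} A^{l+1} = A^l`. -/
theorem stmt_6 {n k m l : ℕ} (hm : 1 ≤ m) (hl : k ≤ l)
    (A CEP AmDag : Matrix (Fin n) (Fin n) ℂ)
    (hInd : HasIndex A k)
    (hCEP : IsCoreEP A CEP k)
    (hMP : MoorePenroseOf (A ^ m) AmDag) :
    CEP ^ (m + 1) * A ^ m * (A ^ m * AmDag) * A ^ (l + 1) = A ^ l :=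
  stmt_6_general hl A CEP AmDag hInd hCEP hMP
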